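/- Corollary 1: Consider a multi-edge type D-GLDPC ensemble in which every variable-node and check-node local code has minimum distance at least 2 and no encoded bit is punctured. Suppose that the following disjointness condition holds: whenever a socket of edge type l ∈ E of a VN type γ ∈ F_{V2} belongs to the support of a weight-2 local codeword of γ, then no CN type δ ∈ F_{C2} has a socket of edge type l belonging to the support of a weight-2 local codeword of δ. Then the matrix product P(ε)·C is the zero matrix, its spectral radius is 0, and the fixed point 1 of the EXIT recursion f(·,ε) is locally stable for every ε ∈ (0,1). -/

import Mathlib

open scoped Classical

noncomputable section

namespace MET

/-- Hamming weight of a binary vector. -/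
def hWeight {m : ℕ} (x : Fin m → ZMod 2) : ℕ :=
  (Finset.univ.filter fun i => x i ≠ 0).card

/-- The row space of `G` (the local code) has minimum Hamming weight at least 2. -/
def HasMinDistGE2 {k q : ℕ} (G : Matrix (Fin k) (Fin q) (ZMod 2)) : Prop :=
  ∀ x : Fin k → ZMod 2, Matrix.vecMul x G ≠ 0 → 2 ≤ hWeight (Matrix.vecMul x G)

/-- The row space of `G` has minimum Hamming weight exactly 2. -/
def HasMinDistEq2 {k q : ℕ} (G : Matrix (Fin k) (Fin q) (ZMod 2)) : Prop :=
  HasMinDistGE2 G ∧ ∃ x : Fin k → ZMod 2, hWeight (Matrix.vecMul x G) = 2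

/-- The weight-2 vector supported on `{i,j}`. -/
def wt2vec {q : ℕ} (i j : Fin q) : Fin q → ZMod 2 :=
  fun r => if r = i ∨ r = j then 1 else 0

/-- Number of columns of edge type `l`. -/
def colCount {q n : ℕ} (τ : Fin q → Fin n) (l : Fin n) : ℕ :=
  (Finset.univ.filter fun j => τ j = l).card

/-- Rank of the matrix formed by the columns of `G` indexed by `A` together with the columns
of the `k × k` identity matrix indexed by `T`. -/
def colRank {k q : ℕ} (G : Matrix (Fin k) (Fin q) (ZMod 2))
    (A : Finset (Fin q)) (T : Finset (Fin k)) : ℕ :=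
  Matrix.rank (Matrix.of fun (i : Fin k) (j : {x // x ∈ A} ⊕ {x // x ∈ T}) =>
    Sum.elim (fun a => G i a.1) (fun t => if i = t.1 then (1 : ZMod 2) else 0) j)

/-- Multi-type split information function `ẽ_{g;u}` of a VN generator matrix. -/
def eTilde {n k q : ℕ} (G : Matrix (Fin k) (Fin q) (ZMod 2)) (τ : Fin q → Fin n)
    (g : Fin n → ℕ) (u : ℕ) : ℕ :=
  ∑ A ∈ Finset.univ.filter (fun A : Finset (Fin q) =>
      ∀ l, (A.filter fun j => τ j = l).card = g l),
    ∑ T ∈ Finset.univ.filter (fun T : Finset (Fin k) => T.card = u),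
      colRank G A T

/-- Multi-type information function `ẽ_g` of a CN generator matrix. -/
def eTildeC {n h s : ℕ} (G : Matrix (Fin h) (Fin s) (ZMod 2)) (τ : Fin s → Fin n)
    (g : Fin n → ℕ) : ℕ :=
  ∑ A ∈ Finset.univ.filter (fun A : Finset (Fin s) =>
      ∀ l, (A.filter fun j => τ j = l).card = g l),
    colRank G A ∅

/-- `χ_{2,u}(l,m)`: ordered pairs of distinct columns of types `l,m` supporting a weight-2
codeword generated by a weight-`u` input word. -/
def chi2 {n k q : ℕ} (G : Matrix (Fin k) (Fin q) (ZMod 2)) (τ : Fin q → Fin n)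
    (u : ℕ) (l m : Fin n) : ℕ :=
  (Finset.univ.filter fun p : Fin q × Fin q =>
    p.1 ≠ p.2 ∧ τ p.1 = l ∧ τ p.2 = m ∧
      ∃ x : Fin k → ZMod 2, hWeight x = u ∧ Matrix.vecMul x G = wt2vec p.1 p.2).card

/-- `ξ_2(l,m)`: ordered pairs of distinct coordinates of types `l,m` supporting a weight-2
codeword of the row space. -/
def xi2 {n h s : ℕ} (G : Matrix (Fin h) (Fin s) (ZMod 2)) (τ : Fin s → Fin n)
    (l m : Fin n) : ℕ :=
  (Finset.univ.filter fun p : Fin s × Fin s =>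
    p.1 ≠ p.2 ∧ τ p.1 = l ∧ τ p.2 = m ∧
      ∃ x : Fin h → ZMod 2, Matrix.vecMul x G = wt2vec p.1 p.2).card

/-- Range of the tuple `t`: `0 ≤ t l ≤ q l` for `l ≠ e` and `0 ≤ t e ≤ q e - 1`. -/
def tRange {n : ℕ} (q : Fin n → ℕ) (e : Fin n) : Finset (Fin n → ℕ) :=
  Fintype.piFinset fun l => Finset.range (if l = e then q l else q l + 1)

/-- The coefficient `a^{(γ,e)}_{t,z}` of the VN EXIT function. -/
def aVN {n k q : ℕ} (G : Matrix (Fin k) (Fin q) (ZMod 2)) (τ : Fin q → Fin n)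
    (e : Fin n) (t : Fin n → ℕ) (z : ℕ) : ℝ :=
  ((colCount τ e - t e : ℕ) : ℝ) *
      (eTilde G τ (fun l => colCount τ l - t l) (k - z) : ℝ)
    - ((t e + 1 : ℕ) : ℝ) *
      (eTilde G τ (fun l => colCount τ l - t l - (if l = e then 1 else 0)) (k - z) : ℝ)

/-- The coefficient `a^{(δ,e)}_{t}` of the CN EXIT function. -/
def aCN {n h s : ℕ} (G : Matrix (Fin h) (Fin s) (ZMod 2)) (τ : Fin s → Fin n)
    (e : Fin n) (t : Fin n → ℕ) : ℝ :=
  ((colCount τ e - t e : ℕ) : ℝ) *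
      (eTildeC G τ (fun l => colCount τ l - t l) : ℝ)
    - ((t e + 1 : ℕ) : ℝ) *
      (eTildeC G τ (fun l => colCount τ l - t l - (if l = e then 1 else 0)) : ℝ)

/-- Per-type VN EXIT function `I_{EV,e}^{(γ)}(I, ε)`. -/
def IEV {n k q : ℕ} (G : Matrix (Fin k) (Fin q) (ZMod 2)) (τ : Fin q → Fin n)
    (e : Fin n) (I : Fin n → ℝ) (ε : ℝ) : ℝ :=
  1 - (1 / (colCount τ e : ℝ)) *
    ∑ z ∈ Finset.range (k + 1), ε ^ z * (1 - ε) ^ (k - z) *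
      ∑ t ∈ tRange (colCount τ) e,
        (∏ l, (1 - I l) ^ t l * (I l) ^ (colCount τ l - t l - (if l = e then 1 else 0))) *
          aVN G τ e t z

/-- Per-type CN EXIT function `I_{EC,e}^{(δ)}(I)`. -/
def IEC {n h s : ℕ} (G : Matrix (Fin h) (Fin s) (ZMod 2)) (τ : Fin s → Fin n)
    (e : Fin n) (I : Fin n → ℝ) : ℝ :=
  1 - (1 / (colCount τ e : ℝ)) *
    ∑ t ∈ tRange (colCount τ) e,
      (∏ l, (1 - I l) ^ t l * (I l) ^ (colCount τ l - t l - (if l = e then 1 else 0))) *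
        aCN G τ e t

/-- A variable node type: a `k × q` generator matrix over `GF(2)` with a typing of its
columns by edge types (no punctured bits). -/
structure VNType (n : ℕ) where
  k : ℕ
  q : ℕ
  G : Matrix (Fin k) (Fin q) (ZMod 2)
  τ : Fin q → Fin n

/-- A check node type: an `h × s` generator matrix over `GF(2)` with a typing of its
columns by edge types. -/
structure CNType (n : ℕ) where
  h : ℕ
  s : ℕ
  G : Matrix (Fin h) (Fin s) (ZMod 2)
  τ : Fin s → Fin n

/-- The variable-node side of a MET D-GLDPC ensemble. -/
structure VNSide (n : ℕ) where
  nV : ℕ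
  vn : Fin nV → VNType n
  lam : Fin nV → Fin n → ℝ
  lam_nonneg : ∀ γ l, 0 ≤ lam γ l
  lam_sum : ∀ l, ∑ γ, lam γ l = 1
  lam_pos_iff : ∀ γ l, 0 < lam γ l ↔ 0 < colCount (vn γ).τ l

/-- The check-node side of a MET D-GLDPC ensemble. -/
structure CNSide (n : ℕ) where
  nC : ℕ
  cn : Fin nC → CNType n
  rho : Fin nC → Fin n → ℝ
  rho_nonneg : ∀ δ l, 0 ≤ rho δ l
  rho_sum : ∀ l, ∑ δ, rho δ l = 1
  rho_pos_iff : ∀ δ l, 0 < rho δ l ↔ 0 < colCount (cn δ).τ l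

/-- A MET D-GLDPC ensemble. -/
structure Ensemble (n : ℕ) extends VNSide n, CNSide n

/-- All VN local codes have full-rank generator matrix and minimum distance at least 2. -/
def VNSide.Good {n : ℕ} (V : VNSide n) : Prop :=
  ∀ γ, ((V.vn γ).G).rank = (V.vn γ).k ∧ HasMinDistGE2 (V.vn γ).G

/-- All CN local codes have full-rank generator matrix and minimum distance at least 2. -/
def CNSide.Good {n : ℕ} (C : CNSide n) : Prop :=
  ∀ δ, ((C.cn δ).G).rank = (C.cn δ).h ∧ HasMinDistGE2 (C.cn δ).G

/-- The matrix `P(ε)` with entries `P^{l,m}(ε)`. -/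
def Pmat {n : ℕ} (V : VNSide n) (ε : ℝ) : Matrix (Fin n) (Fin n) ℝ :=
  Matrix.of fun l m =>
    ∑ γ, if HasMinDistEq2 (V.vn γ).G then
      (V.lam γ l / (colCount (V.vn γ).τ l : ℝ)) *
        ∑ u ∈ Finset.Icc 1 (V.vn γ).k, (chi2 (V.vn γ).G (V.vn γ).τ u l m : ℝ) * ε ^ u
    else 0

/-- The matrix `C` with entries `C^{l,m}`. -/
def Cmat {n : ℕ} (C : CNSide n) : Matrix (Fin n) (Fin n) ℝ :=
  Matrix.of fun l m =>
    ∑ δ, if HasMinDistEq2 (C.cn δ).G then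
      (C.rho δ l / (colCount (C.cn δ).τ l : ℝ)) * (xi2 (C.cn δ).G (C.cn δ).τ l m : ℝ)
    else 0

/-- Aggregate VN EXIT function `I_{EV,e}(I,ε)`. -/
def IEVagg {n : ℕ} (V : VNSide n) (e : Fin n) (I : Fin n → ℝ) (ε : ℝ) : ℝ :=
  ∑ γ ∈ Finset.univ.filter (fun γ => 0 < V.lam γ e),
    V.lam γ e * IEV (V.vn γ).G (V.vn γ).τ e I ε

/-- Aggregate CN EXIT function `I_{EC,e}(I)`. -/
def IECagg {n : ℕ} (C : CNSide n) (e : Fin n) (I : Fin n → ℝ) : ℝ :=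
  ∑ δ ∈ Finset.univ.filter (fun δ => 0 < C.rho δ e),
    C.rho δ e * IEC (C.cn δ).G (C.cn δ).τ e I

/-- The EXIT recursion `f(·,ε)`. -/
def exitMap {n : ℕ} (E : Ensemble n) (ε : ℝ) (I : Fin n → ℝ) : Fin n → ℝ :=
  fun e => IEVagg E.toVNSide e (fun m => IECagg E.toCNSide m I) ε

/-- Local stability of the fixed point `1` of the EXIT recursion. -/
def LocallyStable {n : ℕ} (E : Ensemble n) (ε : ℝ) : Prop :=
  ∃ U : Set (Fin n → ℝ), IsOpen U ∧ (fun _ => (1 : ℝ)) ∈ U ∧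
    ∀ I ∈ U ∩ Set.Icc (fun _ => (0 : ℝ)) (fun _ => (1 : ℝ)),
      Filter.Tendsto (fun m => (exitMap E ε)^[m] I) Filter.atTop (nhds fun _ => (1 : ℝ))

/-- Spectral radius of a real square matrix: the maximum modulus of its complex
eigenvalues. -/
def specRad {m : ℕ} (A : Matrix (Fin m) (Fin m) ℝ) : ℝ :=
  (spectralRadius ℂ (A.map fun x : ℝ => (x : ℂ))).toReal

/-!
Call an edge type `l` *weight-2* for a node type if some socket of type `l` lies in the support
of a weight-2 local codeword. `P^{l,m}(ε)` only counts pairs whose second socket has a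
weight-2 VN type and `C^{l,m}` only pairs whose first socket has a weight-2 CN type, so under
disjointness every term of `(P(ε) C)^{l,m} = Σ_r P^{l,r} C^{r,m}` vanishes.

For stability we show that the EXIT map is flat at `1`, hence a contraction near `1`. The linear
part at `I = 1` of `Σ_t a_t Π_l (1 - I_l)^{t_l} I_l^{c_l}` only involves the coefficients with
`t = 1_j` (and `t = 0`). By double counting, `a_t` vanishes as soon as all column selections
entering it have full rank `k`; removing at most two columns of a full-rank generator matrix of
minimum distance `≥ 2` keeps the rank unless the removed columns support a weight-2 codeword.
So the CN EXIT function of an edge type that is not CN-weight-2 is flat at `1`, the VN EXIT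
function only sees its weight-2 edge types to first order, and by disjointness the composition
is flat.
-/

open Finset

section LocalCode

variable {n k q : ℕ} {G : Matrix (Fin k) (Fin q) (ZMod 2)} {τ : Fin q → Fin n}

def HasWeightTwoSocket (G : Matrix (Fin k) (Fin q) (ZMod 2)) (τ : Fin q → Fin n) (r : Fin n) :
    Prop :=
  ∃ i j, i ≠ j ∧ τ i = r ∧ ∃ x, Matrix.vecMul x G = wt2vec i j

lemma wt2vec_comm (i j : Fin q) : wt2vec i j = wt2vec j i := by
  funext r; simp [wt2vec, or_comm]

lemma support_wt2vec (i j : Fin q) : univ.filter (fun r => wt2vec i j r ≠ 0) = {i, j} := by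
  ext r; simp [wt2vec, or_iff_not_imp_left]

lemma eq_wt2vec_of_support_eq {v : Fin q → ZMod 2} {i j : Fin q}
    (hv : univ.filter (fun r => v r ≠ 0) = {i, j}) : v = wt2vec i j := by
  funext r
  have hr := congrArg (r ∈ ·) hv
  simp only [mem_filter, mem_univ, true_and, mem_insert, mem_singleton, eq_iff_iff] at hr
  by_cases h : r = i ∨ r = j
  · rw [wt2vec, if_pos h]; exact Fin.eq_one_of_ne_zero _ (hr.mpr h)
  · rw [wt2vec, if_neg h]; exact not_not.mp (mt hr.mp h)

lemma HasWeightTwoSocket.of_pair {i j : Fin q} {r : Fin n} (hij : i ≠ j) (hτ : τ i = r ∨ τ j = r)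
    (hx : ∃ x, Matrix.vecMul x G = wt2vec i j) : HasWeightTwoSocket G τ r := by
  rcases hτ with hτ | hτ
  · exact ⟨i, j, hij, hτ, hx⟩
  · exact ⟨j, i, hij.symm, hτ, wt2vec_comm i j ▸ hx⟩

lemma HasWeightTwoSocket.hasMinDistEq2 {r : Fin n} (hmd : HasMinDistGE2 G)
    (h : HasWeightTwoSocket G τ r) : HasMinDistEq2 G := by
  obtain ⟨i, j, hij, -, x, hx⟩ := h
  refine ⟨hmd, x, ?_⟩
  rw [hx, hWeight, support_wt2vec, card_pair hij]

lemma vecMul_injective_of_rank_eq (hrank : G.rank = k) : Function.Injective G.vecMul := by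
  rw [Matrix.vecMul_injective_iff, linearIndependent_iff_card_eq_finrank_span, Set.finrank,
    ← Matrix.rank_eq_finrank_span_row, hrank, Fintype.card_fin]

lemma colRank_eq_of_ker_trivial {A : Finset (Fin q)} (T : Finset (Fin k))
    (hA : ∀ x : Fin k → ZMod 2, (∀ a ∈ A, Matrix.vecMul x G a = 0) → x = 0) :
    colRank G A T = k := by
  refine (LinearIndependent.rank_matrix (Matrix.vecMul_injective_iff.mp fun x y hxy => ?_)).trans
    (Fintype.card_fin k)
  rw [← sub_eq_zero]
  refine hA _ fun a ha => ?_
  rw [Matrix.sub_vecMul, Pi.sub_apply, sub_eq_zero]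
  exact congrFun hxy (Sum.inl ⟨a, ha⟩)

lemma colRank_eq_of_card_sdiff_le_two (hrank : G.rank = k) (hmd : HasMinDistGE2 G)
    {A : Finset (Fin q)} (T : Finset (Fin k)) (hA : #(univ \ A) ≤ 2)
    (hpair : ∀ i j, i ≠ j → univ \ A = {i, j} → ¬ ∃ x, Matrix.vecMul x G = wt2vec i j) :
    colRank G A T = k := by
  refine colRank_eq_of_ker_trivial T fun x hx => ?_
  by_contra hx0
  have hv : Matrix.vecMul x G ≠ 0 := fun h =>
    hx0 (vecMul_injective_of_rank_eq hrank (h.trans (Matrix.zero_vecMul G).symm))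
  have hsub : univ.filter (fun a => Matrix.vecMul x G a ≠ 0) ⊆ univ \ A := fun a ha => by
    simp only [mem_filter, mem_univ, true_and] at ha
    exact mem_sdiff.mpr ⟨mem_univ a, fun haA => ha (hx a haA)⟩
  have hsupp := eq_of_subset_of_card_le hsub (hA.trans (hmd x hv))
  obtain ⟨i, j, hij, hij'⟩ := card_eq_two.mp (le_antisymm hA (hsupp ▸ hmd x hv))
  exact hpair i j hij hij' ⟨x, eq_wt2vec_of_support_eq (hsupp.trans hij')⟩

end LocalCode

section TypedSubsets

variable {n q : ℕ} (τ : Fin q → Fin n)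

def typedSubsets (g : Fin n → ℕ) : Finset (Finset (Fin q)) :=
  univ.filter fun A => ∀ l, #(A.filter fun j => τ j = l) = g l

variable {τ}

lemma card_filter_erase_of_mem {A : Finset (Fin q)} {a : Fin q} (ha : a ∈ A) (l : Fin n) :
    #((A.erase a).filter fun j => τ j = l) =
      #(A.filter fun j => τ j = l) - if l = τ a then 1 else 0 := by
  rw [filter_erase]
  split_ifs with h
  · exact card_erase_of_mem (mem_filter.mpr ⟨ha, h.symm⟩)
  · exact congrArg card (erase_eq_of_notMem fun h' => h (mem_filter.mp h').2.symm)

lemma card_filter_insert_of_notMem {A : Finset (Fin q)} {a : Fin q} (ha : a ∉ A) (l : Fin n) :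
    #((insert a A).filter fun j => τ j = l) =
      #(A.filter fun j => τ j = l) + if l = τ a then 1 else 0 := by
  rw [filter_insert]
  split_ifs with h h' h'
  · exact card_insert_of_notMem fun h' => ha (mem_filter.mp h').1
  · exact absurd h.symm h'
  · exact absurd h'.symm h
  · rfl

lemma card_filter_sdiff_of_mem_typedSubsets {g : Fin n → ℕ} {A : Finset (Fin q)}
    (hA : A ∈ typedSubsets τ g) (l : Fin n) :
    #((univ \ A).filter fun j => τ j = l) = colCount τ l - g l := by
  simp only [typedSubsets, mem_filter, mem_univ, true_and] at hA
  have hsplit : (univ \ A).filter (fun j => τ j = l) =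
      univ.filter (fun j => τ j = l) \ A.filter fun j => τ j = l := by
    ext j; simp only [mem_filter, mem_sdiff, mem_univ, true_and]; tauto
  rw [hsplit, card_sdiff_of_subset (filter_subset_filter _ (subset_univ _)), hA l]
  rfl

lemma card_erase_mem_typedSubsets {g : Fin n → ℕ} {e : Fin n} {A : Finset (Fin q)}
    (hA : A ∈ typedSubsets τ g) :
    #((typedSubsets τ fun l => g l - if l = e then 1 else 0).filter
      fun A' => ∃ a ∈ A, τ a = e ∧ A.erase a = A') = g e := by
  have hcount := (mem_filter.mp hA).2
  rw [← hcount e]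
  symm
  refine card_bij (fun a _ => A.erase a) (fun a ha => ?_) (fun a ha b hb hab => ?_) ?_
  · obtain ⟨haA, hae⟩ := mem_filter.mp ha
    refine mem_filter.mpr ⟨mem_filter.mpr ⟨mem_univ _, fun l => ?_⟩, a, haA, hae, rfl⟩
    rw [card_filter_erase_of_mem haA, hcount, hae]
  · exact erase_injOn A (mem_filter.mp ha).1 (mem_filter.mp hb).1 hab
  · rintro A' hA'
    obtain ⟨-, a, haA, hae, rfl⟩ := mem_filter.mp hA'
    exact ⟨a, mem_filter.mpr ⟨haA, hae⟩, rfl⟩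

lemma card_insert_mem_typedSubsets {g : Fin n → ℕ} {e : Fin n} (he : 1 ≤ g e)
    {A' : Finset (Fin q)} (hA' : A' ∈ typedSubsets τ fun l => g l - if l = e then 1 else 0) :
    #((typedSubsets τ g).filter fun A => ∃ a ∈ A, τ a = e ∧ A.erase a = A') =
      colCount τ e + 1 - g e := by
  have hcount : ∀ l, #(A'.filter fun j => τ j = l) = g l - if l = e then 1 else 0 :=
    (mem_filter.mp hA').2
  have hfree : #((univ \ A').filter fun j => τ j = e) = colCount τ e + 1 - g e := by
    rw [card_filter_sdiff_of_mem_typedSubsets hA', if_pos rfl]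
    omega
  rw [← hfree]
  symm
  refine card_bij (fun a _ => insert a A') (fun a ha => ?_) (fun a ha b hb hab => ?_) ?_
  · obtain ⟨haA', hae⟩ := mem_filter.mp ha
    have haA' : a ∉ A' := (mem_sdiff.mp haA').2
    refine mem_filter.mpr ⟨mem_filter.mpr ⟨mem_univ _, fun l => ?_⟩,
      a, mem_insert_self a A', hae, erase_insert haA'⟩
    rw [card_filter_insert_of_notMem haA', hcount, hae]
    split_ifs with h
    · subst h; omega
    · simp
  · exact (insert_inj (mem_sdiff.mp (mem_filter.mp ha).1).2).mp hab
  · rintro A hA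
    obtain ⟨-, a, haA, hae, rfl⟩ := mem_filter.mp hA
    exact ⟨a, mem_filter.mpr ⟨mem_sdiff.mpr ⟨mem_univ a, notMem_erase a A⟩, hae⟩,
      insert_erase haA⟩

/-- Double counting of the pairs `(A, a)` with `a ∈ A` of type `e`, `A` of profile `g`. -/
lemma card_typedSubsets_mul {g : Fin n → ℕ} {e : Fin n} (he : 1 ≤ g e) :
    g e * #(typedSubsets τ g) =
      (colCount τ e + 1 - g e) * #(typedSubsets τ fun l => g l - if l = e then 1 else 0) := by
  rw [mul_comm, mul_comm (_ - _)]
  exact card_mul_eq_card_mul (fun A A' : Finset (Fin q) => ∃ a ∈ A, τ a = e ∧ A.erase a = A')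
    (fun A hA => card_erase_mem_typedSubsets hA) fun A' hA' => card_insert_mem_typedSubsets he hA'

end TypedSubsets

section Coefficients

variable {n k q : ℕ} {G : Matrix (Fin k) (Fin q) (ZMod 2)} {τ : Fin q → Fin n} {e : Fin n}

lemma add_ite_le_of_mem_tRange {c t : Fin n → ℕ} (ht : t ∈ tRange c e) (l : Fin n) :
    t l + (if l = e then 1 else 0) ≤ c l := by
  have := Fintype.mem_piFinset.mp ht l
  rw [mem_range] at this
  split_ifs at this ⊢ <;> omega

lemma eTilde_eq_card_mul {g : Fin n → ℕ} (u : ℕ)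
    (hA : ∀ A ∈ typedSubsets τ g, ∀ T, colRank G A T = k) :
    eTilde G τ g u =
      #(typedSubsets τ g) * (#(univ.filter fun T : Finset (Fin k) => #T = u) * k) := by
  change ∑ A ∈ typedSubsets τ g, _ = _
  rw [sum_congr rfl fun A hA' => sum_congr rfl fun T _ => hA A hA' T]
  simp only [sum_const, smul_eq_mul]

lemma eTilde_zero (g : Fin n → ℕ) : eTilde G τ g 0 = eTildeC G τ g := by
  refine sum_congr rfl fun A _ => ?_
  rw [show univ.filter (fun T : Finset (Fin k) => #T = 0) = {∅} by ext; simp, sum_singleton]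

lemma aCN_eq_aVN (t : Fin n → ℕ) : aCN G τ e t = aVN G τ e t k := by
  rw [aCN, aVN, Nat.sub_self, eTilde_zero, eTilde_zero]

lemma aVN_eq_zero_of_colRank_eq {t : Fin n → ℕ} (z : ℕ) (ht : t e < colCount τ e)
    (hA : ∀ A ∈ typedSubsets τ (fun l => colCount τ l - t l) ∪
      typedSubsets τ (fun l => colCount τ l - t l - if l = e then 1 else 0),
        ∀ T, colRank G A T = k) :
    aVN G τ e t z = 0 := by
  have hcount := card_typedSubsets_mul (τ := τ) (g := fun l => colCount τ l - t l) (e := e)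
    (by omega)
  rw [show colCount τ e + 1 - (colCount τ e - t e) = t e + 1 by omega] at hcount
  rw [aVN, eTilde_eq_card_mul _ fun A h => hA A (mem_union_left _ h),
    eTilde_eq_card_mul _ fun A h => hA A (mem_union_right _ h), sub_eq_zero]
  norm_cast
  rw [← mul_assoc, hcount, mul_assoc]

lemma colRank_eq_of_mem_typedSubsets (hrank : G.rank = k) (hmd : HasMinDistGE2 G)
    {g : Fin n → ℕ} {A : Finset (Fin q)} (hA : A ∈ typedSubsets τ g) (T : Finset (Fin k))
    (hsum : ∑ l, (colCount τ l - g l) ≤ 2)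
    (hsock : ∑ l, (colCount τ l - g l) ≤ 1 ∨
      ∃ r, g r < colCount τ r ∧ ¬ HasWeightTwoSocket G τ r) :
    colRank G A T = k := by
  have hcard : #(univ \ A) = ∑ l, (colCount τ l - g l) := by
    rw [card_eq_sum_card_fiberwise (f := τ) (t := univ) fun _ _ => mem_univ _]
    exact sum_congr rfl fun l _ => card_filter_sdiff_of_mem_typedSubsets hA l
  refine colRank_eq_of_card_sdiff_le_two hrank hmd T (hcard ▸ hsum) fun i j hij hij' hx => ?_
  have h2 : #(univ \ A) = 2 := by rw [hij', card_pair hij]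
  rcases hsock with hle | ⟨r, hr, hnt⟩
  · omega
  · obtain ⟨a, ha⟩ : ((univ \ A).filter fun j => τ j = r).Nonempty := by
      rw [← card_pos, card_filter_sdiff_of_mem_typedSubsets hA r]
      omega
    obtain ⟨haA, rfl⟩ := mem_filter.mp ha
    rw [hij', mem_insert, mem_singleton] at haA
    exact hnt (.of_pair hij (by rcases haA with rfl | rfl <;> simp) hx)

lemma aVN_eq_zero (hrank : G.rank = k) (hmd : HasMinDistGE2 G) {t : Fin n → ℕ} (z : ℕ)
    (ht : t ∈ tRange (colCount τ) e) (hsum : ∑ l, t l ≤ 1)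
    (hsock : ∑ l, t l = 0 ∨
      ∃ r, 1 ≤ t r + (if r = e then 1 else 0) ∧ ¬ HasWeightTwoSocket G τ r) :
    aVN G τ e t z = 0 := by
  have hle := add_ite_le_of_mem_tRange ht
  have hte : t e < colCount τ e := by have := hle e; rw [if_pos rfl] at this; omega
  refine aVN_eq_zero_of_colRank_eq z hte fun A hA T => ?_
  rcases mem_union.mp hA with hA | hA
  · have hs : ∑ l, (colCount τ l - (colCount τ l - t l)) = ∑ l, t l :=
      sum_congr rfl fun l _ => by have := hle l; omega
    exact colRank_eq_of_mem_typedSubsets hrank hmd hA T (by omega) (.inl (by omega))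
  · have hs : ∑ l, (colCount τ l - (colCount τ l - t l - if l = e then 1 else 0)) =
        ∑ l, t l + 1 := by
      rw [sum_congr rfl fun l _ => show _ = t l + if l = e then 1 else 0 by
        have := hle l; omega, sum_add_distrib, sum_ite_eq']
      simp
    refine colRank_eq_of_mem_typedSubsets hrank hmd hA T (by omega) ?_
    rcases hsock with h0 | ⟨r, hr, hnt⟩
    · exact .inl (by omega)
    · exact .inr ⟨r, by have := hle r; omega, hnt⟩

lemma aVN_zero_eq_zero (hrank : G.rank = k) (hmd : HasMinDistGE2 G) (hcc : 0 < colCount τ e)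
    (z : ℕ) : aVN G τ e 0 z = 0 := by
  refine aVN_eq_zero hrank hmd z (Fintype.mem_piFinset.mpr fun l => ?_) (by simp) (.inl (by simp))
  rw [Pi.zero_apply, mem_range]
  split_ifs with h
  · exact h ▸ hcc
  · omega

lemma aVN_single_eq_zero (hrank : G.rank = k) (hmd : HasMinDistGE2 G) {j : Fin n} (z : ℕ)
    (hj : Pi.single j 1 ∈ tRange (colCount τ) e)
    (hnt : ¬ HasWeightTwoSocket G τ j ∨ ¬ HasWeightTwoSocket G τ e) :
    aVN G τ e (Pi.single j 1) z = 0 :=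
  aVN_eq_zero hrank hmd z hj (by simp) <| .inr <|
    hnt.elim (fun h => ⟨j, by simp, h⟩) fun h => ⟨e, by simp, h⟩

end Coefficients

section ExitPoly

variable {n : ℕ}

def exitPoly (R : Finset (Fin n → ℕ)) (c : (Fin n → ℕ) → Fin n → ℕ) (a : (Fin n → ℕ) → ℝ)
    (I : Fin n → ℝ) : ℝ :=
  ∑ t ∈ R, (∏ l, (1 - I l) ^ t l * I l ^ c t l) * a t

variable {R : Finset (Fin n → ℕ)} {c : (Fin n → ℕ) → Fin n → ℕ} {a : (Fin n → ℕ) → ℝ}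

lemma exitPoly_one (h0 : a 0 = 0) : exitPoly R c a 1 = 0 := by
  refine sum_eq_zero fun t _ => ?_
  by_cases ht : t = 0
  · rw [ht, h0, mul_zero]
  · obtain ⟨l, hl⟩ := Function.ne_iff.mp ht
    rw [prod_eq_zero (mem_univ l) (by simp [zero_pow hl]), zero_mul]

lemma hasDerivAt_one_sub_pow_mul_pow (i j : ℕ) :
    HasDerivAt (fun x : ℝ => (1 - x) ^ i * x ^ j)
      (if i = 0 then (j : ℝ) else if i = 1 then -1 else 0) 1 := by
  refine ((((hasDerivAt_id 1).const_sub 1).fun_pow i).fun_mul (hasDerivAt_pow j 1)).congr_deriv ?_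
  rcases i with _ | _ | i <;> simp

lemma hasFDerivAt_monomial (t ct : Fin n → ℕ) :
    HasFDerivAt (fun I : Fin n → ℝ => ∏ l, (1 - I l) ^ t l * I l ^ ct l)
      (∑ l, (if t = 0 then (ct l : ℝ) else if t = Pi.single l 1 then -1 else 0) •
        ContinuousLinearMap.proj (R := ℝ) (φ := fun _ : Fin n => ℝ) l) 1 := by
  have hfactor (l : Fin n) :
      HasFDerivAt (fun I : Fin n → ℝ => (1 - I l) ^ t l * I l ^ ct l)
        ((if t l = 0 then (ct l : ℝ) else if t l = 1 then -1 else 0) •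
          ContinuousLinearMap.proj (R := ℝ) (φ := fun _ : Fin n => ℝ) l) 1 := by
    have hcoord : HasFDerivAt (fun I : Fin n → ℝ => I l)
        (ContinuousLinearMap.proj (R := ℝ) (φ := fun _ : Fin n => ℝ) l) 1 :=
      hasFDerivAt_apply l 1
    exact (hasDerivAt_one_sub_pow_mul_pow (t l) (ct l)).comp_hasFDerivAt 1 hcoord
  refine (HasFDerivAt.finsetProd fun l _ => hfactor l).congr_fderiv (sum_congr rfl fun l _ => ?_)
  rw [smul_smul]
  congr 1
  simp only [Pi.one_apply, sub_self, one_pow, mul_one]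
  by_cases hoff : ∀ j ≠ l, t j = 0
  · have ht : t = Pi.single l (t l) := funext fun j => by
      by_cases hj : j = l
      · subst hj; simp
      · simp [hj, hoff j hj]
    rw [prod_eq_one fun j hj => by rw [hoff j (ne_of_mem_erase hj), pow_zero], one_mul]
    rcases hl : t l with _ | _ | m
    · rw [hl, Pi.single_zero] at ht; subst ht; simp
    · rw [hl] at ht; subst ht; simp
    · have hne : t ≠ Pi.single l 1 ∧ t ≠ 0 := by
        constructor <;> intro h <;> have := congrFun h l <;> simp [hl] at this
      simp [hne]
  · obtain ⟨j, hjl, hj⟩ : ∃ j ≠ l, t j ≠ 0 := by simpa using hoff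
    have hne : t ≠ Pi.single l 1 ∧ t ≠ 0 :=
      ⟨fun h => hj (by simp [h, hjl]), fun h => hj (by simp [h])⟩
    rw [prod_eq_zero (mem_erase.mpr ⟨hjl, mem_univ j⟩) (by simp [zero_pow hj])]
    simp [hne]

lemma hasFDerivAt_exitPoly (h0 : a 0 = 0) :
    HasFDerivAt (exitPoly R c a)
      (-∑ j ∈ univ.filter (fun j => Pi.single j 1 ∈ R),
        a (Pi.single j 1) • ContinuousLinearMap.proj (R := ℝ) (φ := fun _ : Fin n => ℝ) j) 1 := by
  refine (HasFDerivAt.fun_sum fun t _ => (hasFDerivAt_monomial t (c t)).mul_const (a t))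
    |>.congr_fderiv ?_
  simp only [smul_sum, smul_smul]
  rw [sum_comm, sum_filter, ← sum_neg_distrib]
  refine sum_congr rfl fun l _ => ?_
  have hcoef (t : Fin n → ℕ) :
      a t * (if t = 0 then (c t l : ℝ) else if t = Pi.single l 1 then -1 else 0) =
        if t = Pi.single l 1 then -a t else 0 := by
    by_cases ht : t = 0
    · simp [ht, h0]
    · split_ifs <;> simp
  rw [← sum_smul, sum_congr rfl fun t _ => hcoef t, sum_ite_eq']
  split_ifs <;> simp

end ExitPoly

section NodeExit

variable {n k q : ℕ} {G : Matrix (Fin k) (Fin q) (ZMod 2)} {τ : Fin q → Fin n} {e : Fin n}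

lemma IEC_eq_exitPoly :
    IEC G τ e = fun I => 1 - 1 / (colCount τ e : ℝ) *
      exitPoly (tRange (colCount τ) e) (fun t l => colCount τ l - t l - if l = e then 1 else 0)
        (aCN G τ e) I :=
  rfl

lemma IEV_eq_exitPoly (ε : ℝ) :
    (fun I => IEV G τ e I ε) = fun I => 1 - 1 / (colCount τ e : ℝ) *
      ∑ z ∈ range (k + 1), ε ^ z * (1 - ε) ^ (k - z) *
        exitPoly (tRange (colCount τ) e) (fun t l => colCount τ l - t l - if l = e then 1 else 0)
          (fun t => aVN G τ e t z) I :=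
  rfl

lemma IEC_one (hrank : G.rank = k) (hmd : HasMinDistGE2 G) (hcc : 0 < colCount τ e) :
    IEC G τ e 1 = 1 := by
  rw [IEC_eq_exitPoly]
  beta_reduce
  rw [exitPoly_one ((aCN_eq_aVN 0).trans (aVN_zero_eq_zero hrank hmd hcc k)), mul_zero, sub_zero]

lemma IEV_one (hrank : G.rank = k) (hmd : HasMinDistGE2 G) (hcc : 0 < colCount τ e) (ε : ℝ) :
    IEV G τ e 1 ε = 1 := by
  change (fun I => IEV G τ e I ε) 1 = 1
  rw [IEV_eq_exitPoly]
  beta_reduce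
  rw [sum_eq_zero fun z _ => by
    rw [exitPoly_one (aVN_zero_eq_zero hrank hmd hcc z), mul_zero], mul_zero, sub_zero]

lemma hasFDerivAt_IEC_eq_zero (hrank : G.rank = k) (hmd : HasMinDistGE2 G)
    (hcc : 0 < colCount τ e) (hnt : ¬ HasWeightTwoSocket G τ e) :
    HasFDerivAt (IEC G τ e) (0 : (Fin n → ℝ) →L[ℝ] ℝ) 1 := by
  have hpoly := hasFDerivAt_exitPoly (R := tRange (colCount τ) e)
    (c := fun t l => colCount τ l - t l - if l = e then 1 else 0) (a := aCN G τ e)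
    ((aCN_eq_aVN 0).trans (aVN_zero_eq_zero hrank hmd hcc k))
  rw [sum_eq_zero fun j hj => by
    rw [aCN_eq_aVN, aVN_single_eq_zero hrank hmd k (mem_filter.mp hj).2 (.inr hnt), zero_smul],
    neg_zero] at hpoly
  rw [IEC_eq_exitPoly]
  simpa using (hpoly.const_mul _).const_sub 1

lemma fderiv_IEV_apply_eq_zero (hrank : G.rank = k) (hmd : HasMinDistGE2 G)
    (hcc : 0 < colCount τ e) (ε : ℝ) {w : Fin n → ℝ}
    (hw : ∀ r, HasWeightTwoSocket G τ r → w r = 0) :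
    fderiv ℝ (fun I => IEV G τ e I ε) 1 w = 0 := by
  have hpoly (z : ℕ) := hasFDerivAt_exitPoly (R := tRange (colCount τ) e)
    (c := fun t l => colCount τ l - t l - if l = e then 1 else 0)
    (a := fun t => aVN G τ e t z) (aVN_zero_eq_zero hrank hmd hcc z)
  have hkill (z : ℕ) : ∑ j ∈ univ.filter (fun j => Pi.single j 1 ∈ tRange (colCount τ) e),
      aVN G τ e (Pi.single j 1) z * w j = 0 := by
    refine sum_eq_zero fun j hj => ?_
    by_cases hs : HasWeightTwoSocket G τ j
    · rw [hw j hs, mul_zero]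
    · rw [aVN_single_eq_zero hrank hmd z (mem_filter.mp hj).2 (.inl hs), zero_mul]
  rw [IEV_eq_exitPoly,
    (((HasFDerivAt.fun_sum fun z _ => (hpoly z).const_mul _).const_mul _).const_sub 1).fderiv]
  simp [hkill]

end NodeExit

section Ensemble

variable {n : ℕ}

lemma IECagg_one {C : CNSide n} (hC : C.Good) (e : Fin n) : IECagg C e 1 = 1 := by
  rw [IECagg, sum_congr rfl fun δ hδ => by
      rw [IEC_one (hC δ).1 (hC δ).2 ((C.rho_pos_iff δ e).mp (mem_filter.mp hδ).2), mul_one],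
    sum_filter_of_ne fun δ _ h => (C.rho_nonneg δ e).lt_of_ne' h, C.rho_sum e]

lemma IEVagg_one {V : VNSide n} (hV : V.Good) (e : Fin n) (ε : ℝ) : IEVagg V e 1 ε = 1 := by
  rw [IEVagg, sum_congr rfl fun γ hγ => by
      rw [IEV_one (hV γ).1 (hV γ).2 ((V.lam_pos_iff γ e).mp (mem_filter.mp hγ).2), mul_one],
    sum_filter_of_ne fun γ _ h => (V.lam_nonneg γ e).lt_of_ne' h, V.lam_sum e]

lemma differentiable_IECagg (C : CNSide n) (e : Fin n) : Differentiable ℝ (IECagg C e) := by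
  unfold IECagg IEC
  fun_prop

lemma differentiable_IEV {k q : ℕ} (G : Matrix (Fin k) (Fin q) (ZMod 2)) (τ : Fin q → Fin n)
    (e : Fin n) (ε : ℝ) : Differentiable ℝ (fun I => IEV G τ e I ε) := by
  unfold IEV
  fun_prop

lemma differentiable_IEVagg (V : VNSide n) (e : Fin n) (ε : ℝ) :
    Differentiable ℝ (fun J => IEVagg V e J ε) := by
  unfold IEVagg IEV
  fun_prop

lemma hasFDerivAt_IECagg_eq_zero {C : CNSide n} (hC : C.Good) {r : Fin n}
    (hr : ∀ δ, ¬ HasWeightTwoSocket (C.cn δ).G (C.cn δ).τ r) :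
    HasFDerivAt (IECagg C r) (0 : (Fin n → ℝ) →L[ℝ] ℝ) 1 := by
  have := HasFDerivAt.fun_sum (u := univ.filter fun δ => 0 < C.rho δ r) fun δ hδ =>
    (hasFDerivAt_IEC_eq_zero (hC δ).1 (hC δ).2 ((C.rho_pos_iff δ r).mp (mem_filter.mp hδ).2)
      (hr δ)).const_mul (C.rho δ r)
  simp only [smul_zero, sum_const_zero] at this
  exact this

lemma fderiv_IEVagg_apply_eq_zero {V : VNSide n} (hV : V.Good) (e : Fin n) (ε : ℝ)
    {w : Fin n → ℝ} (hw : ∀ γ r, HasWeightTwoSocket (V.vn γ).G (V.vn γ).τ r → w r = 0) :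
    fderiv ℝ (fun J => IEVagg V e J ε) 1 w = 0 := by
  have hd (γ : Fin V.nV) := differentiable_IEV (V.vn γ).G (V.vn γ).τ e ε 1
  simp only [IEVagg]
  rw [fderiv_fun_sum fun γ _ => (hd γ).const_mul _, _root_.sum_apply]
  refine sum_eq_zero fun γ hγ => ?_
  rw [fderiv_const_mul (hd γ), _root_.smul_apply,
    fderiv_IEV_apply_eq_zero (hV γ).1 (hV γ).2 ((V.lam_pos_iff γ e).mp (mem_filter.mp hγ).2) ε
      (hw γ), smul_zero]

lemma exitMap_one {E : Ensemble n} (hV : E.toVNSide.Good) (hC : E.toCNSide.Good) (ε : ℝ) :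
    exitMap E ε 1 = 1 := by
  funext e
  rw [exitMap, show (fun m => IECagg E.toCNSide m 1) = 1 from funext (IECagg_one hC)]
  exact IEVagg_one hV e ε

lemma hasFDerivAt_exitMap_eq_zero {E : Ensemble n} (hV : E.toVNSide.Good) (hC : E.toCNSide.Good)
    (ε : ℝ) (hsep : ∀ r, (∃ γ, HasWeightTwoSocket (E.vn γ).G (E.vn γ).τ r) →
      ∀ δ, ¬ HasWeightTwoSocket (E.cn δ).G (E.cn δ).τ r) :
    HasFDerivAt (exitMap E ε) (0 : (Fin n → ℝ) →L[ℝ] (Fin n → ℝ)) 1 := by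
  have hCN : HasFDerivAt (fun I m => IECagg E.toCNSide m I)
      (ContinuousLinearMap.pi fun m => fderiv ℝ (IECagg E.toCNSide m) 1) 1 :=
    hasFDerivAt_pi.mpr fun m => (differentiable_IECagg _ m 1).hasFDerivAt
  have hVN (e : Fin n) : HasFDerivAt (fun J => IEVagg E.toVNSide e J ε)
      (fderiv ℝ (fun J => IEVagg E.toVNSide e J ε) 1) (fun m => IECagg E.toCNSide m 1) := by
    rw [show (fun m => IECagg E.toCNSide m 1) = 1 from funext (IECagg_one hC)]
    exact (differentiable_IEVagg _ e ε 1).hasFDerivAt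
  refine (hasFDerivAt_pi.mpr fun e => (hVN e).comp 1 hCN).congr_fderiv ?_
  ext v e
  refine fderiv_IEVagg_apply_eq_zero hV e ε fun γ r hγr => ?_
  simp [(hasFDerivAt_IECagg_eq_zero hC (hsep r ⟨γ, hγr⟩)).fderiv]

end Ensemble

section Stability

open Filter Topology

lemma eventually_tendsto_iterate_of_hasFDerivAt {E : Type*} [NormedAddCommGroup E]
    [NormedSpace ℝ E] {f : E → E} {x₀ : E} {L : E →L[ℝ] E} (hfx : f x₀ = x₀)
    (hf : HasFDerivAt f L x₀) (hL : ‖L‖ < 1) :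
    ∀ᶠ x in 𝓝 x₀, Tendsto (fun m => f^[m] x) atTop (𝓝 x₀) := by
  obtain ⟨c, hLc, hc1⟩ := exists_between hL
  have hc0 : 0 ≤ c := (norm_nonneg L).trans hLc.le
  obtain ⟨δ, hδ, hball⟩ :=
    Metric.eventually_nhds_iff_ball.mp (hf.isLittleO.def (sub_pos.mpr hLc))
  have hcontract : ∀ x ∈ Metric.ball x₀ δ, ‖f x - x₀‖ ≤ c * ‖x - x₀‖ := fun x hx => by
    have hx := hball x hx
    rw [hfx] at hx
    calc ‖f x - x₀‖ ≤ ‖f x - x₀ - L (x - x₀)‖ + ‖L (x - x₀)‖ := norm_le_norm_sub_add _ _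
      _ ≤ (c - ‖L‖) * ‖x - x₀‖ + ‖L‖ * ‖x - x₀‖ := add_le_add hx (L.le_opNorm _)
      _ = c * ‖x - x₀‖ := by ring
  have hmaps : Set.MapsTo f (Metric.ball x₀ δ) (Metric.ball x₀ δ) := fun x hx => by
    rw [mem_ball_iff_norm] at hx ⊢
    exact (hcontract x (mem_ball_iff_norm.mpr hx)).trans_lt
      ((mul_le_of_le_one_left (norm_nonneg _) hc1.le).trans_lt hx)
  filter_upwards [Metric.ball_mem_nhds x₀ hδ] with x hx
  have hbound (m : ℕ) : ‖f^[m] x - x₀‖ ≤ c ^ m * ‖x - x₀‖ := by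
    induction m with
    | zero => simp
    | succ m ih =>
      rw [Function.iterate_succ_apply', pow_succ', mul_assoc]
      exact (hcontract _ (hmaps.iterate m hx)).trans (mul_le_mul_of_nonneg_left ih hc0)
  refine tendsto_iff_norm_sub_tendsto_zero.mpr (squeeze_zero (fun _ => norm_nonneg _) hbound ?_)
  simpa using (tendsto_pow_atTop_nhds_zero_of_lt_one hc0 hc1).mul_const ‖x - x₀‖

lemma locallyStable_of_hasFDerivAt {n : ℕ} {E : Ensemble n} {ε : ℝ}
    {L : (Fin n → ℝ) →L[ℝ] (Fin n → ℝ)} (h1 : exitMap E ε 1 = 1)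
    (hd : HasFDerivAt (exitMap E ε) L 1) (hL : ‖L‖ < 1) : LocallyStable E ε := by
  obtain ⟨U, hU, hUo, h1U⟩ :=
    eventually_nhds_iff.mp (eventually_tendsto_iterate_of_hasFDerivAt h1 hd hL)
  exact ⟨U, hUo, h1U, fun I hI => hU I hI.1⟩

end Stability

section SpectralCondition

variable {n k q : ℕ} {G : Matrix (Fin k) (Fin q) (ZMod 2)} {τ : Fin q → Fin n}

lemma chi2_eq_zero {m : Fin n} (h : ¬ HasWeightTwoSocket G τ m) (u : ℕ) (l : Fin n) :
    chi2 G τ u l m = 0 := by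
  rw [chi2, card_eq_zero, filter_eq_empty_iff]
  rintro ⟨i, j⟩ - ⟨hij, -, hj, x, -, hx⟩
  exact h (.of_pair hij (.inr hj) ⟨x, hx⟩)

lemma xi2_eq_zero {l : Fin n} (h : ¬ HasWeightTwoSocket G τ l) (m : Fin n) :
    xi2 G τ l m = 0 := by
  rw [xi2, card_eq_zero, filter_eq_empty_iff]
  rintro ⟨i, j⟩ - ⟨hij, hi, -, hx⟩
  exact h (.of_pair hij (.inl hi) hx)

lemma Pmat_apply_eq_zero {V : VNSide n} (ε : ℝ) (l : Fin n) {r : Fin n}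
    (hr : ∀ γ, ¬ HasWeightTwoSocket (V.vn γ).G (V.vn γ).τ r) : Pmat V ε l r = 0 := by
  rw [Pmat, Matrix.of_apply]
  exact sum_eq_zero fun γ _ => by simp [chi2_eq_zero (hr γ)]

lemma Cmat_apply_eq_zero {C : CNSide n} {r : Fin n}
    (hr : ∀ δ, ¬ HasWeightTwoSocket (C.cn δ).G (C.cn δ).τ r) (m : Fin n) : Cmat C r m = 0 := by
  rw [Cmat, Matrix.of_apply]
  exact sum_eq_zero fun δ _ => by simp [xi2_eq_zero (hr δ)]

lemma Pmat_mul_Cmat_eq_zero {V : VNSide n} {C : CNSide n} (ε : ℝ)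
    (hsep : ∀ r, (∃ γ, HasWeightTwoSocket (V.vn γ).G (V.vn γ).τ r) →
      ∀ δ, ¬ HasWeightTwoSocket (C.cn δ).G (C.cn δ).τ r) :
    Pmat V ε * Cmat C = 0 := by
  ext l m
  rw [Matrix.mul_apply, Matrix.zero_apply]
  refine sum_eq_zero fun r _ => ?_
  by_cases hVr : ∃ γ, HasWeightTwoSocket (V.vn γ).G (V.vn γ).τ r
  · rw [Cmat_apply_eq_zero (hsep r hVr), mul_zero]
  · rw [Pmat_apply_eq_zero ε l (not_exists.mp hVr), zero_mul]

lemma specRad_zero (m : ℕ) : specRad (0 : Matrix (Fin m) (Fin m) ℝ) = 0 := by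
  simp [specRad]

end SpectralCondition

theorem corollary_disjoint_types_general {n : ℕ} (E : Ensemble n)
    (hV : E.toVNSide.Good) (hC : E.toCNSide.Good)
    (hdisj : ∀ l : Fin n, ∀ γ : Fin E.nV, HasMinDistEq2 (E.vn γ).G →
      ∀ i j : Fin (E.vn γ).q, i ≠ j → (E.vn γ).τ i = l →
      (∃ x, Matrix.vecMul x (E.vn γ).G = wt2vec i j) →
      ∀ δ : Fin E.nC, HasMinDistEq2 (E.cn δ).G →
      ∀ i' j' : Fin (E.cn δ).s, i' ≠ j' → (E.cn δ).τ i' = l →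
      ¬ ∃ y, Matrix.vecMul y (E.cn δ).G = wt2vec i' j') :
    ∀ ε ∈ Set.Ioo (0 : ℝ) 1,
      Pmat E.toVNSide ε * Cmat E.toCNSide = 0 ∧
      specRad (Pmat E.toVNSide ε * Cmat E.toCNSide) = 0 ∧
      LocallyStable E ε := by
  intro ε _
  have hsep : ∀ r, (∃ γ, HasWeightTwoSocket (E.vn γ).G (E.vn γ).τ r) →
      ∀ δ, ¬ HasWeightTwoSocket (E.cn δ).G (E.cn δ).τ r := by
    rintro r ⟨γ, hγ⟩ δ hδ
    have hγ2 := hγ.hasMinDistEq2 (hV γ).2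
    have hδ2 := hδ.hasMinDistEq2 (hC δ).2
    obtain ⟨i, j, hij, hi, hx⟩ := hγ
    obtain ⟨i', j', hij', hi', hy⟩ := hδ
    exact hdisj r γ hγ2 i j hij hi hx δ hδ2 i' j' hij' hi' hy
  have hPC := Pmat_mul_Cmat_eq_zero ε hsep
  refine ⟨hPC, by rw [hPC, specRad_zero], ?_⟩
  exact locallyStable_of_hasFDerivAt (exitMap_one hV hC ε)
    (hasFDerivAt_exitMap_eq_zero hV hC ε hsep) (by simp)

/-- **Corollary 1.** If no edge type carries both a VN-side and a CN-side socket lying in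
the support of a weight-2 local codeword (of a minimum-distance-2 VN type resp. CN type),
then `P(ε) ⬝ C = 0`, its spectral radius is `0`, and the fixed point `1` of the EXIT
recursion is locally stable for every `ε ∈ (0,1)`. -/
theorem corollary_disjoint_types {n : ℕ} (hn : 1 ≤ n) (E : Ensemble n)
    (hV : E.toVNSide.Good) (hC : E.toCNSide.Good)
    (hdisj : ∀ l : Fin n, ∀ γ : Fin E.nV, HasMinDistEq2 (E.vn γ).G →
      ∀ i j : Fin (E.vn γ).q, i ≠ j → (E.vn γ).τ i = l →
      (∃ x, Matrix.vecMul x (E.vn γ).G = wt2vec i j) →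
      ∀ δ : Fin E.nC, HasMinDistEq2 (E.cn δ).G →
      ∀ i' j' : Fin (E.cn δ).s, i' ≠ j' → (E.cn δ).τ i' = l →
      ¬ ∃ y, Matrix.vecMul y (E.cn δ).G = wt2vec i' j') :
    ∀ ε ∈ Set.Ioo (0 : ℝ) 1,
      Pmat E.toVNSide ε * Cmat E.toCNSide = 0 ∧
      specRad (Pmat E.toVNSide ε * Cmat E.toCNSide) = 0 ∧
      LocallyStable E ε :=
  corollary_disjoint_types_general E hV hC hdisj

end MET
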